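/- arXiv:1904.10759 — 2 statements merged into one kernel-verified Lean document; each statement's English description precedes it below -/
import Mathlib

section
/- The three ordinal notation systems are equivalent (Theorems 3.3 and 3.5): the map sending a tree in Cantor normal form to its ~-equivalence class is a bijection between the subtype {t : Tree // isCNF t} and the quotient Tree ⧸ ~; equivalently, every ~-equivalence class of trees contains exactly one tree in Cantor normal form. -/
namespace CNFOrd

/-- Binary trees: `omega a b` represents the ordinal `ω^a + b`. -/
inductive T : Type
  | zero : T
  | omega : T → T → T
  deriving DecidableEq

namespace T

/-- The strict order on trees. -/
inductive Lt : T → T → Prop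
  | lt1 {a b : T} : Lt zero (omega a b)
  | lt2 {a b c d : T} : Lt a c → Lt (omega a b) (omega c d)
  | lt3 {a b c d : T} : a = c → Lt b d → Lt (omega a b) (omega c d)

/-- `a ≥ b` means `b < a` or `a = b`. -/
def Ge (a b : T) : Prop := Lt b a ∨ a = b

/-- First exponent of a tree. -/
def fst : T → T
  | zero => zero
  | omega a _ => a

/-- The predicate of being in Cantor normal form. -/
inductive isCNF : T → Prop
  | zero : isCNF zero
  | omega {a b : T} : isCNF a → isCNF b → Ge a (fst b) → isCNF (omega a b)

/-- Decidability of the strict order. -/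
def decLt : (a b : T) → Decidable (Lt a b)
  | _, zero => isFalse fun h => nomatch h
  | zero, omega _ _ => isTrue .lt1
  | omega a b, omega c d =>
    match decLt a c with
    | isTrue h => isTrue (.lt2 h)
    | isFalse h1 =>
      if he : a = c then
        match decLt b d with
        | isTrue h2 => isTrue (.lt3 he h2)
        | isFalse h2 => isFalse fun h => by
            cases h with
            | lt2 h' => exact h1 h'
            | lt3 _ h2' => exact h2 h2'
      else isFalse fun h => by
            cases h with
            | lt2 h' => exact h1 h'
            | lt3 he' _ => exact he he'

instance : ∀ a b : T, Decidable (Lt a b) := decLt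

/-- List insertion. -/
def insert (a : T) : T → T
  | zero => omega a zero
  | omega b c => if Lt a b then omega b (insert a c) else omega a (omega b c)

/-- The permutation congruence: smallest equivalence relation which is a
congruence for `omega` and satisfies the swap rule. -/
inductive Perm : T → T → Prop
  | refl (a : T) : Perm a a
  | symm {a b : T} : Perm a b → Perm b a
  | trans {a b c : T} : Perm a b → Perm b c → Perm a c
  | congr {a a' b b' : T} : Perm a a' → Perm b b' → Perm (omega a b) (omega a' b')
  | swap (a b c : T) : Perm (omega a (omega b c)) (omega b (omega a c))

instance permSetoid : Setoid T := ⟨Perm, ⟨Perm.refl, Perm.symm, Perm.trans⟩⟩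

/-- Hessenberg sum. -/
def oplus : T → T → T
  | zero, y => y
  | omega a b, y => omega a (oplus b y)

/-- Ordinal addition. -/
def add : T → T → T
  | zero, b => b
  | a, zero => a
  | omega a c, omega b d => if Lt a b then omega b d else omega a (add c (omega b d))

/-- Ordinal multiplication. -/
def mul : T → T → T
  | zero, _ => zero
  | _, zero => zero
  | a, omega zero d => add a (mul a d)
  | omega a c, omega b d => omega (add a b) (mul (omega a c) d)

end T

end CNFOrd

/-!
Insertion sort `sort` picks the Cantor normal form of a class. Inserting two exponents in
either order gives the same tree, which is the swap rule, so `sort` is constant on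
`~`-classes; every tree is `~` to its sort, because each insertion step is a swap; and `sort`
fixes trees already in Cantor normal form.
-/

namespace CNFOrd.T

theorem lt_irrefl (a : T) : ¬ Lt a a := by
  induction a with
  | zero => intro h; cases h
  | omega a b iha ihb =>
    intro h
    cases h with
    | lt2 h => exact iha h
    | lt3 _ h => exact ihb h

theorem lt_trans {a b c : T} (hab : Lt a b) (hbc : Lt b c) : Lt a c := by
  induction hab generalizing c with
  | lt1 => cases hbc <;> exact .lt1
  | lt2 h ih =>
    cases hbc with
    | lt2 h' => exact .lt2 (ih h')
    | lt3 he _ => exact .lt2 (he ▸ h)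
  | lt3 he h ih =>
    cases hbc with
    | lt2 h' => exact .lt2 (he ▸ h')
    | lt3 he' h' => exact .lt3 (he.trans he') (ih h')

theorem lt_asymm {a b : T} (h : Lt a b) : ¬ Lt b a := fun h' =>
  lt_irrefl a (lt_trans h h')

theorem lt_trichotomy (s t : T) : Lt s t ∨ s = t ∨ Lt t s := by
  induction s generalizing t with
  | zero => cases t with
    | zero => exact .inr (.inl rfl)
    | omega => exact .inl .lt1
  | omega a b iha ihb =>
    cases t with
    | zero => exact .inr (.inr .lt1)
    | omega c d =>
      rcases iha c with h | rfl | h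
      · exact .inl (.lt2 h)
      · rcases ihb d with h | rfl | h
        · exact .inl (.lt3 rfl h)
        · exact .inr (.inl rfl)
        · exact .inr (.inr (.lt3 rfl h))
      · exact .inr (.inr (.lt2 h))

theorem not_lt_iff_ge {a b : T} : ¬ Lt a b ↔ Ge a b := by
  refine ⟨fun h => ?_, ?_⟩
  · rcases lt_trichotomy a b with h' | h' | h'
    · exact absurd h' h
    · exact .inr h'
    · exact .inl h'
  · rintro (h | rfl)
    · exact lt_asymm h
    · exact lt_irrefl a

theorem ge_zero (a : T) : Ge a zero := by
  cases a with
  | zero => exact .inr rfl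
  | omega => exact .inl .lt1

def sort : T → T
  | zero => zero
  | omega a b => T.insert (sort a) (sort b)

theorem fst_insert (a t : T) : fst (T.insert a t) = a ∨ fst (T.insert a t) = fst t := by
  cases t with
  | zero => exact .inl rfl
  | omega b c =>
    unfold T.insert
    split
    · exact .inr rfl
    · exact .inl rfl

theorem isCNF_insert {a t : T} (ha : isCNF a) (ht : isCNF t) : isCNF (T.insert a t) := by
  induction ht with
  | zero => exact .omega ha .zero (ge_zero a)
  | @omega b c hb hc hbc _ ihc =>
    unfold T.insert
    split
    · rename_i hab
      refine .omega hb ihc ?_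
      rcases fst_insert a c with h | h <;> rw [h]
      · exact .inl hab
      · exact hbc
    · rename_i hab
      exact .omega ha (.omega hb hc hbc) (not_lt_iff_ge.mp hab)

theorem isCNF_sort (t : T) : isCNF (sort t) := by
  induction t with
  | zero => exact .zero
  | omega _ _ iha ihb => exact isCNF_insert iha ihb

theorem insert_eq_omega_of_ge_fst {a t : T} (h : Ge a (fst t)) : T.insert a t = omega a t := by
  cases t with
  | zero => rfl
  | omega b c => exact if_neg (not_lt_iff_ge.mpr h)

theorem sort_eq_self_of_isCNF {t : T} (h : isCNF t) : sort t = t := by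
  induction h with
  | zero => rfl
  | @omega a b _ _ hab iha ihb =>
    show T.insert (sort a) (sort b) = omega a b
    rw [iha, ihb, insert_eq_omega_of_ge_fst hab]

theorem insert_perm (a t : T) : Perm (T.insert a t) (omega a t) := by
  induction t with
  | zero => exact .refl _
  | omega b c _ ihc =>
    unfold T.insert
    split
    · exact .trans (.congr (.refl b) ihc) (.swap b a c)
    · exact .refl _

theorem sort_perm (t : T) : Perm (sort t) t := by
  induction t with
  | zero => exact .refl _
  | omega a b iha ihb => exact .trans (insert_perm (sort a) (sort b)) (.congr iha ihb)

theorem insert_insert_of_lt {a b : T} (hba : Lt b a) (c : T) :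
    T.insert a (T.insert b c) = T.insert b (T.insert a c) := by
  have hab := lt_asymm hba
  induction c with
  | zero => simp [T.insert, hba, hab]
  | omega d e _ ihe =>
    by_cases had : Lt a d
    · simp [T.insert, had, lt_trans hba had, ihe]
    by_cases hbd : Lt b d
    · simp [T.insert, had, hbd, hba]
    · simp [T.insert, had, hbd, hba, hab]

theorem insert_comm (a b c : T) : T.insert a (T.insert b c) = T.insert b (T.insert a c) := by
  rcases lt_trichotomy a b with h | rfl | h
  · exact (insert_insert_of_lt h c).symm
  · rfl
  · exact insert_insert_of_lt h c

theorem sort_eq_of_perm {s t : T} (h : Perm s t) : sort s = sort t := by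
  induction h with
  | refl => rfl
  | symm _ ih => exact ih.symm
  | trans _ _ ih₁ ih₂ => exact ih₁.trans ih₂
  | congr _ _ ih₁ ih₂ => exact congrArg₂ T.insert ih₁ ih₂
  | swap a b c => exact insert_comm (sort a) (sort b) (sort c)

end CNFOrd.T

open CNFOrd T in
/-- the map sending a tree in Cantor normal form to its `~`-equivalence
class is a bijection between `{t : T // isCNF t}` and the quotient `T ⧸ ~`. -/
theorem cnf_quotient_bijective :
    Function.Bijective
      (fun x : {t : T // isCNF t} => (⟦x.val⟧ : Quotient permSetoid)) := by
  constructor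
  · rintro ⟨s, hs⟩ ⟨t, ht⟩ h
    have hsort : sort s = sort t := sort_eq_of_perm (Quotient.exact h)
    rw [sort_eq_self_of_isCNF hs, sort_eq_self_of_isCNF ht] at hsort
    exact Subtype.ext hsort
  · intro q
    induction q using Quotient.ind with
    | _ t => exact ⟨⟨sort t, isCNF_sort t⟩, Quotient.sound (sort_perm t)⟩
end

section
/- Ordinal addition preserves Cantor normal form: for all trees a, b, if isCNF a and isCNF b, then isCNF (a + b). -/
namespace CNFOrd
namespace T

theorem lt_trichotomy' : ∀ a b : T, Lt a b ∨ a = b ∨ Lt b a := by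
  intro a
  induction a with
  | zero =>
    intro b; cases b with
    | zero => exact Or.inr (Or.inl rfl)
    | omega c d => exact Or.inl .lt1
  | omega a c iha ihc =>
    intro b; cases b with
    | zero => exact Or.inr (Or.inr .lt1)
    | omega b d =>
      rcases iha b with h | h | h
      · exact Or.inl (.lt2 h)
      · rcases ihc d with h2 | h2 | h2
        · exact Or.inl (.lt3 h h2)
        · exact Or.inr (Or.inl (by rw [h, h2]))
        · exact Or.inr (Or.inr (.lt3 h.symm h2))
      · exact Or.inr (Or.inr (.lt2 h))

theorem fst_add (c b d : T) :
    fst (add c (omega b d)) = fst c ∨ fst (add c (omega b d)) = b := by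
  cases c with
  | zero => exact Or.inr rfl
  | omega a' c' =>
    simp only [add]
    split
    · exact Or.inr rfl
    · exact Or.inl rfl

end T
end CNFOrd

open CNFOrd T in
/-- ordinal addition preserves Cantor normal form. -/
theorem isCNF_add : ∀ a b : T, isCNF a → isCNF b → isCNF (add a b) := by
  intro a b ha hb
  induction ha generalizing b with
  | zero => simpa only [add] using hb
  | @omega a c ha hc hge iha ihc =>
    cases b with
    | zero => exact .omega ha hc hge
    | omega b d =>
      simp only [add]
      split
      · exact hb
      · next hab =>
        refine .omega ha (ihc _ hb) ?_
        rcases fst_add c b d with h | h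
        · rw [h]; exact hge
        · rw [h]
          rcases lt_trichotomy' a b with h' | h' | h'
          · exact absurd h' hab
          · exact Or.inr h'
          · exact Or.inl h'
end
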